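/- Consider the proportional allocation mechanism with n agents and m divisible resources, where every agent i has a monotone, normalized, subadditive valuation v_i : [0,1]^m → ℝ≥0 and a budget c_i ≥ 0. Let b be a nonnegative bid profile with Σ_j b_{ij} ≤ c_i for every i, with Σ_{k≠i} b_{kj} > 0 for every i and j, and suppose b is a pure Nash equilibrium among budget-feasible deviations: for every agent i and every b'_i ∈ ℝ≥0^m with Σ_j b'_{ij} ≤ c_i, u_i(b) ≥ u_i(b'_i, b_{-i}). Then for every feasible allocation o (o_{ij} ≥ 0, Σ_i o_{ij} ≤ 1 for every j), the social welfare at equilibrium is at least half of the optimal effective welfare: Σ_i v_i(x_i(b)) ≥ (1/2)·Σ_i min{v_i(o_i), c_i}. -/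

import Mathlib

/-!
Let `p_j = ∑_k b_kj` be the price of resource `j` at equilibrium. Against the others' bids,
agent `i` can bid `o_ij p_j` on each resource; since `o_ij p_j + ∑_{k ≠ i} b_kj ≤ 2 p_j`, this
secures at least `o_ij / 2` of it, worth at least `v_i(o_i) / 2` by subadditivity. Either this
deviation is affordable, and the equilibrium condition bounds `v_i(o_i)` by twice the utility plus
the cost `∑_j o_ij p_j`, or the cost exceeds the budget `c_i` while `u_i(b) ≥ 0` (bidding nothing
is a deviation). In both cases `min (v_i(o_i)) c_i ≤ 2 u_i(b) + 2 ∑_j o_ij p_j`, and summing over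
agents, the total cost of `o` at prices `p` is at most the total payment `∑_ij b_ij`, which leaves
`2 ∑_i v_i(x_i(b))`.
-/

/-- The fractional allocation of the proportional allocation mechanism. -/
noncomputable def propAlloc {n m : ℕ} (b : Fin n → Fin m → ℝ) (i : Fin n) : Fin m → ℝ :=
  fun j => b i j / ∑ k, b k j

/-- Agent `i`'s quasilinear utility in the proportional allocation mechanism. -/
noncomputable def propUtility {n m : ℕ} (v : (Fin m → ℝ) → ℝ)
    (b : Fin n → Fin m → ℝ) (i : Fin n) : ℝ :=
  v (propAlloc b i) - ∑ j, b i j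

open Finset

def InUnitCube {ι : Type*} (x : ι → ℝ) : Prop := ∀ j, 0 ≤ x j ∧ x j ≤ 1

lemma InUnitCube.half {ι : Type*} {x : ι → ℝ} (hx : InUnitCube x) :
    InUnitCube fun j => x j / 2 :=
  fun j => ⟨by linarith [(hx j).1], by linarith [(hx j).2]⟩

lemma le_two_mul_apply_half_of_subadditive {ι : Type*} {v : (ι → ℝ) → ℝ}
    (hsub : ∀ x y : ι → ℝ, InUnitCube x → InUnitCube y → InUnitCube (x + y) →
      v (x + y) ≤ v x + v y)
    {x : ι → ℝ} (hx : InUnitCube x) :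
    v x ≤ 2 * v fun j => x j / 2 := by
  have hsplit : (fun j => x j / 2) + (fun j => x j / 2) = x := by
    funext j
    simp only [Pi.add_apply]
    ring
  have h := hsub _ _ hx.half hx.half (by rwa [hsplit])
  rw [hsplit] at h
  linarith

lemma half_le_mul_div_mul_add {o p B : ℝ} (ho : 0 ≤ o) (ho1 : o ≤ 1) (hB : 0 < B)
    (hBp : B ≤ p) :
    o / 2 ≤ o * p / (o * p + B) := by
  have hp : 0 ≤ p := hB.le.trans hBp
  have hden : o * p + B ≤ 2 * p := by nlinarith
  rw [div_le_div_iff₀ two_pos (by positivity)]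
  nlinarith [mul_le_mul_of_nonneg_left hden ho]

lemma sum_sum_mul_sum_le_sum_sum {ι κ : Type*} [Fintype ι] [Fintype κ] (o b : ι → κ → ℝ)
    (hb : ∀ i j, 0 ≤ b i j) (hfeas : ∀ j, ∑ i, o i j ≤ 1) :
    ∑ i, ∑ j, o i j * ∑ k, b k j ≤ ∑ i, ∑ j, b i j := by
  rw [sum_comm, sum_comm (f := b)]
  simp_rw [← sum_mul]
  gcongr with j
  exact mul_le_of_le_one_left (sum_nonneg fun k _ => hb k j) (hfeas j)

section ProportionalAllocation

variable {n m : ℕ}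

lemma sum_update_apply_eq_add_sum_erase (b : Fin n → Fin m → ℝ) (i : Fin n)
    (b' : Fin m → ℝ) (j : Fin m) :
    ∑ k, Function.update b i b' k j = b' j + ∑ k ∈ univ.erase i, b k j := by
  rw [← add_sum_erase _ _ (mem_univ i), Function.update_self]
  congr 1
  exact sum_congr rfl fun k hk => by rw [Function.update_of_ne (ne_of_mem_erase hk)]

lemma propAlloc_update_self (b : Fin n → Fin m → ℝ) (i : Fin n) (b' : Fin m → ℝ)
    (j : Fin m) :
    propAlloc (Function.update b i b') i j = b' j / (b' j + ∑ k ∈ univ.erase i, b k j) := by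
  simp only [propAlloc, Function.update_self, sum_update_apply_eq_add_sum_erase]

lemma inUnitCube_propAlloc {b : Fin n → Fin m → ℝ} (hb : ∀ k j, 0 ≤ b k j) (i : Fin n) :
    InUnitCube (propAlloc b i) := fun j =>
  have htotal : 0 ≤ ∑ k, b k j := sum_nonneg fun k _ => hb k j
  ⟨div_nonneg (hb i j) htotal,
    div_le_one_of_le₀ (single_le_sum (fun k _ => hb k j) (mem_univ i)) htotal⟩

lemma update_nonneg {b : Fin n → Fin m → ℝ} (hb : ∀ k j, 0 ≤ b k j) (i : Fin n)
    {b' : Fin m → ℝ} (hb' : ∀ j, 0 ≤ b' j) (k : Fin n) (j : Fin m) :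
    0 ≤ Function.update b i b' k j := by
  rcases eq_or_ne k i with rfl | hk
  · simpa using hb' j
  · simpa [Function.update_of_ne hk] using hb k j

lemma propUtility_update_zero {v : (Fin m → ℝ) → ℝ} (hv0 : v 0 = 0)
    (b : Fin n → Fin m → ℝ) (i : Fin n) :
    propUtility v (Function.update b i 0) i = 0 := by
  have hx : propAlloc (Function.update b i 0) i = 0 := funext fun j => by simp [propAlloc]
  simp [propUtility, hx, hv0]

lemma half_le_propAlloc_update_mul_sum {b : Fin n → Fin m → ℝ} (hb : ∀ k j, 0 ≤ b k j)
    {i : Fin n} (hpos : ∀ j, 0 < ∑ k ∈ univ.erase i, b k j) {o : Fin m → ℝ}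
    (ho : InUnitCube o) (j : Fin m) :
    o j / 2 ≤ propAlloc (Function.update b i fun j => o j * ∑ k, b k j) i j := by
  rw [propAlloc_update_self]
  exact half_le_mul_div_mul_add (ho j).1 (ho j).2 (hpos j)
    (sum_le_sum_of_subset_of_nonneg (erase_subset _ _) fun k _ _ => hb k j)

lemma min_le_two_mul_propUtility_add_sum {v : (Fin m → ℝ) → ℝ} {c : ℝ} (hc : 0 ≤ c)
    (hv0 : v 0 = 0)
    (hmono : ∀ x x' : Fin m → ℝ, InUnitCube x → InUnitCube x' → (∀ j, x j ≤ x' j) →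
      v x ≤ v x')
    (hsub : ∀ x y : Fin m → ℝ, InUnitCube x → InUnitCube y → InUnitCube (x + y) →
      v (x + y) ≤ v x + v y)
    {b : Fin n → Fin m → ℝ} (hb : ∀ k j, 0 ≤ b k j) {i : Fin n}
    (hpos : ∀ j, 0 < ∑ k ∈ univ.erase i, b k j)
    (hNE : ∀ b' : Fin m → ℝ, (∀ j, 0 ≤ b' j) → ∑ j, b' j ≤ c →
      propUtility v (Function.update b i b') i ≤ propUtility v b i)
    {o : Fin m → ℝ} (ho : InUnitCube o) :
    min (v o) c ≤ 2 * propUtility v b i + 2 * ∑ j, o j * ∑ k, b k j := by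
  have hu : 0 ≤ propUtility v b i :=
    propUtility_update_zero hv0 b i ▸ hNE 0 (fun _ => le_rfl) (by simpa using hc)
  by_cases hcost : ∑ j, o j * ∑ k, b k j ≤ c
  · have hdev : 0 ≤ fun j => o j * ∑ k, b k j := fun j =>
      mul_nonneg (ho j).1 (sum_nonneg fun k _ => hb k j)
    have hNE' := hNE _ hdev hcost
    have hx' := inUnitCube_propAlloc (update_nonneg hb i hdev) i
    calc min (v o) c ≤ v o := min_le_left _ _
      _ ≤ 2 * v fun j => o j / 2 := le_two_mul_apply_half_of_subadditive hsub ho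
      _ ≤ 2 * v (propAlloc (Function.update b i fun j => o j * ∑ k, b k j) i) := by
        gcongr
        exact hmono _ _ ho.half hx' (half_le_propAlloc_update_mul_sum hb hpos ho)
      _ = 2 * propUtility v (Function.update b i fun j => o j * ∑ k, b k j) i
          + 2 * ∑ j, o j * ∑ k, b k j := by
        rw [propUtility, Function.update_self]
        ring
      _ ≤ _ := by linarith
  · calc min (v o) c ≤ c := min_le_right _ _
      _ ≤ _ := by linarith

end ProportionalAllocation

theorem stmt_12_general (n m : ℕ) (v : Fin n → (Fin m → ℝ) → ℝ) (c : Fin n → ℝ)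
    (hc : ∀ i, 0 ≤ c i)
    (hv0 : ∀ i, v i 0 = 0)
    (hmono : ∀ i (x x' : Fin m → ℝ), (∀ j, 0 ≤ x j ∧ x j ≤ 1) →
      (∀ j, 0 ≤ x' j ∧ x' j ≤ 1) → (∀ j, x j ≤ x' j) → v i x ≤ v i x')
    (hsub : ∀ i (x y : Fin m → ℝ), (∀ j, 0 ≤ x j ∧ x j ≤ 1) →
      (∀ j, 0 ≤ y j ∧ y j ≤ 1) → (∀ j, 0 ≤ x j + y j ∧ x j + y j ≤ 1) →
      v i (x + y) ≤ v i x + v i y)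
    (b : Fin n → Fin m → ℝ) (hb : ∀ i j, 0 ≤ b i j)
    (hpos : ∀ i j, 0 < ∑ k ∈ Finset.univ.erase i, b k j)
    (hNE : ∀ i (b' : Fin m → ℝ), (∀ j, 0 ≤ b' j) → ∑ j, b' j ≤ c i →
      propUtility (v i) (Function.update b i b') i ≤ propUtility (v i) b i)
    (o : Fin n → Fin m → ℝ) (ho : ∀ i j, 0 ≤ o i j) (hfeas : ∀ j, ∑ i, o i j ≤ 1) :
    ∑ i, v i (propAlloc b i) ≥ (1 / 2) * ∑ i, min (v i (o i)) (c i) := by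
  have hcube : ∀ i, InUnitCube (o i) := fun i j =>
    ⟨ho i j, (single_le_sum (fun k _ => ho k j) (mem_univ i)).trans (hfeas j)⟩
  have hagent : ∀ i, min (v i (o i)) (c i) ≤
      2 * propUtility (v i) b i + 2 * ∑ j, o i j * ∑ k, b k j := fun i =>
    min_le_two_mul_propUtility_add_sum (hc i) (hv0 i) (hmono i) (hsub i) hb (hpos i) (hNE i)
      (hcube i)
  have hcost := sum_sum_mul_sum_le_sum_sum o b hb hfeas
  calc (1 / 2) * ∑ i, min (v i (o i)) (c i)
      ≤ (1 / 2) * ∑ i, (2 * propUtility (v i) b i + 2 * ∑ j, o i j * ∑ k, b k j) := by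
        gcongr with i
        exact hagent i
    _ = ∑ i, v i (propAlloc b i) - ∑ i, ∑ j, b i j + ∑ i, ∑ j, o i j * ∑ k, b k j := by
        simp only [propUtility, sum_add_distrib, sum_sub_distrib, ← mul_sum]
        ring
    _ ≤ ∑ i, v i (propAlloc b i) := by linarith

/-- with budget-constrained agents having monotone, normalized,
subadditive valuations, at any pure Nash equilibrium (among budget-feasible
deviations) of the proportional allocation mechanism, the social welfare is at
least half of the effective welfare of any feasible allocation. -/
theorem stmt_12 (n m : ℕ) (v : Fin n → (Fin m → ℝ) → ℝ) (c : Fin n → ℝ)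
    (hc : ∀ i, 0 ≤ c i)
    (hv0 : ∀ i, v i 0 = 0)
    (hvnn : ∀ i (x : Fin m → ℝ), (∀ j, 0 ≤ x j ∧ x j ≤ 1) → 0 ≤ v i x)
    (hmono : ∀ i (x x' : Fin m → ℝ), (∀ j, 0 ≤ x j ∧ x j ≤ 1) →
      (∀ j, 0 ≤ x' j ∧ x' j ≤ 1) → (∀ j, x j ≤ x' j) → v i x ≤ v i x')
    (hsub : ∀ i (x y : Fin m → ℝ), (∀ j, 0 ≤ x j ∧ x j ≤ 1) →
      (∀ j, 0 ≤ y j ∧ y j ≤ 1) → (∀ j, 0 ≤ x j + y j ∧ x j + y j ≤ 1) →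
      v i (x + y) ≤ v i x + v i y)
    (b : Fin n → Fin m → ℝ) (hb : ∀ i j, 0 ≤ b i j)
    (hbudget : ∀ i, ∑ j, b i j ≤ c i)
    (hpos : ∀ i j, 0 < ∑ k ∈ Finset.univ.erase i, b k j)
    (hNE : ∀ i (b' : Fin m → ℝ), (∀ j, 0 ≤ b' j) → ∑ j, b' j ≤ c i →
      propUtility (v i) (Function.update b i b') i ≤ propUtility (v i) b i)
    (o : Fin n → Fin m → ℝ) (ho : ∀ i j, 0 ≤ o i j) (hfeas : ∀ j, ∑ i, o i j ≤ 1) :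
    ∑ i, v i (propAlloc b i) ≥ (1 / 2) * ∑ i, min (v i (o i)) (c i) :=
  stmt_12_general n m v c hc hv0 hmono hsub b hb hpos hNE o ho hfeas
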